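/- arXiv:1511.01048 — 5 statements merged into one kernel-verified Lean document; each statement's English description precedes it below -/
import Mathlib

section
/- Let A be a commutative ring and M ∈ Symₙ(A). The set Σ(M) of all vectors v ∈ Aⁿ such that s·M = vvᵀ + N for some sum of squares s ∈ ΣA² and some symmetric matrix N that is a sum of squares, is an A-submodule of Aⁿ. -/
/-!
Scaling `s • M = v vᵀ + N` by `c²` puts `c • v` into `Σ(M)`. For `v₁, v₂ ∈ Σ(M)` the
parallelogram identity `(v₁+v₂)(v₁+v₂)ᵀ + (v₁−v₂)(v₁−v₂)ᵀ = 2(v₁v₁ᵀ + v₂v₂ᵀ)` gives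
`2(s₁ + s₂) • M = (v₁+v₂)(v₁+v₂)ᵀ + ((v₁−v₂)(v₁−v₂)ᵀ + 2N₁ + 2N₂)`, and `2 = 1² + 1²`
keeps both the scalar and the error term sums of squares.
-/

open Matrix

/-- A symmetric matrix is a *sum of squares* if it equals `Qᵀ * Q` for some matrix `Q`. -/
def Matrix.IsSumOfSquares {A : Type*} [CommRing A] {n : ℕ}
    (M : Matrix (Fin n) (Fin n) A) : Prop :=
  ∃ (m : ℕ) (Q : Matrix (Fin m) (Fin n) A), M = Qᵀ * Q

/-- `Σ(M)`: the set of vectors `v` with `s • M = v vᵀ + N` for some sum of squares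
`s ∈ ΣA²` and some sum-of-squares matrix `N`. -/
def SigmaSet {A : Type*} [CommRing A] {n : ℕ} (M : Matrix (Fin n) (Fin n) A) :
    Set (Fin n → A) :=
  {v | ∃ s : A, IsSumSq s ∧ ∃ N : Matrix (Fin n) (Fin n) A,
    N.IsSumOfSquares ∧ s • M = vecMulVec v v + N}

theorem Matrix.vecMulVec_add_add_vecMulVec_sub {ι A : Type*} [CommRing A] (v w : ι → A) :
    vecMulVec (v + w) (v + w) + vecMulVec (v - w) (v - w) =
      (2 : A) • (vecMulVec v v + vecMulVec w w) := by
  simp only [add_vecMulVec, vecMulVec_add, sub_vecMulVec, vecMulVec_sub]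
  module

section SumOfSquares

variable {A : Type*} [CommRing A] {n : ℕ}

theorem Matrix.isSumOfSquares_transpose_mul {ι : Type*} [Fintype ι] (Q : Matrix ι (Fin n) A) :
    (Qᵀ * Q).IsSumOfSquares := by
  let e := (Fintype.equivFin ι).symm
  refine ⟨Fintype.card ι, Q.submatrix e id, ?_⟩
  rw [transpose_submatrix, submatrix_mul_equiv, submatrix_id_id]

theorem Matrix.isSumOfSquares_zero : (0 : Matrix (Fin n) (Fin n) A).IsSumOfSquares :=
  ⟨0, 0, by simp⟩

theorem Matrix.IsSumOfSquares.add {N₁ N₂ : Matrix (Fin n) (Fin n) A}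
    (h₁ : N₁.IsSumOfSquares) (h₂ : N₂.IsSumOfSquares) : (N₁ + N₂).IsSumOfSquares := by
  obtain ⟨m₁, Q₁, rfl⟩ := h₁
  obtain ⟨m₂, Q₂, rfl⟩ := h₂
  rw [← fromCols_mul_fromRows, ← transpose_fromRows]
  exact isSumOfSquares_transpose_mul _

theorem Matrix.IsSumOfSquares.mul_self_smul {N : Matrix (Fin n) (Fin n) A}
    (h : N.IsSumOfSquares) (c : A) : ((c * c) • N).IsSumOfSquares := by
  obtain ⟨m, Q, rfl⟩ := h
  exact ⟨m, c • Q, by rw [transpose_smul, Matrix.smul_mul, Matrix.mul_smul, smul_smul]⟩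

theorem Matrix.isSumOfSquares_vecMulVec (v : Fin n → A) : (vecMulVec v v).IsSumOfSquares := by
  rw [vecMulVec_eq Unit, ← transpose_replicateRow]
  exact isSumOfSquares_transpose_mul _

end SumOfSquares

section SigmaSet

variable {A : Type*} [CommRing A] {n : ℕ} (M : Matrix (Fin n) (Fin n) A)

theorem zero_mem_sigmaSet : 0 ∈ SigmaSet M :=
  ⟨0, .zero, 0, isSumOfSquares_zero, by simp⟩

theorem add_mem_sigmaSet {v₁ v₂ : Fin n → A} (h₁ : v₁ ∈ SigmaSet M) (h₂ : v₂ ∈ SigmaSet M) :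
    v₁ + v₂ ∈ SigmaSet M := by
  obtain ⟨s₁, hs₁, N₁, hN₁, he₁⟩ := h₁
  obtain ⟨s₂, hs₂, N₂, hN₂, he₂⟩ := h₂
  have hs : IsSumSq ((s₁ + s₂) + (s₁ + s₂)) := (hs₁.add hs₂).add (hs₁.add hs₂)
  have hN : (vecMulVec (v₁ - v₂) (v₁ - v₂) + ((N₁ + N₁) + (N₂ + N₂))).IsSumOfSquares :=
    (isSumOfSquares_vecMulVec _).add ((hN₁.add hN₁).add (hN₂.add hN₂))
  refine ⟨_, hs, _, hN, ?_⟩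
  have key := vecMulVec_add_add_vecMulVec_sub v₁ v₂
  simp only [add_smul, he₁, he₂]
  linear_combination (norm := module) -key

theorem smul_mem_sigmaSet (c : A) {v : Fin n → A} (h : v ∈ SigmaSet M) :
    c • v ∈ SigmaSet M := by
  obtain ⟨s, hs, N, hN, he⟩ := h
  refine ⟨c * c * s, (IsSumSq.mul_self c).mul hs, _, hN.mul_self_smul c, ?_⟩
  rw [mul_smul, he, smul_vecMulVec, vecMulVec_smul, smul_add, smul_smul]

def sigmaSubmodule : Submodule A (Fin n → A) where
  carrier := SigmaSet M
  zero_mem' := zero_mem_sigmaSet M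
  add_mem' := add_mem_sigmaSet M
  smul_mem' := smul_mem_sigmaSet M

end SigmaSet

theorem sigmaSet_isSubmodule {A : Type*} [CommRing A] {n : ℕ}
    (M : Matrix (Fin n) (Fin n) A) :
    ∃ S : Submodule A (Fin n → A), (S : Set (Fin n → A)) = SigmaSet M :=
  ⟨sigmaSubmodule M, rfl⟩
end

section
/- Let A be a commutative ring, f ∈ A[X] monic of degree n with companion matrix C, and g ∈ A[X] of degree at most n−1. Then the Bézout matrix satisfies the intertwining relation C·B(f,g) = B(f,g)·Cᵀ. -/
open Polynomial Matrix

/-- `B` is the Bézout matrix of `f` and `g`: in `A[X][Y]` (with `Y` the outer variable),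
`f(Y)g(X) - f(X)g(Y) = (Y - X) * Σ_{i,j} B i j • Y^i X^j`. -/
def IsBezoutMatrix {A : Type*} [CommRing A] {n : ℕ} (f g : A[X])
    (B : Matrix (Fin n) (Fin n) A) : Prop :=
  aeval (X : A[X][X]) f * aeval (C X : A[X][X]) g
      - aeval (C X : A[X][X]) f * aeval (X : A[X][X]) g
    = (X - C X) *
      ∑ i : Fin n, ∑ j : Fin n, C (C (B i j)) * X ^ (i : ℕ) * (C X) ^ (j : ℕ)

/-- The companion matrix of a monic polynomial `f` of degree `n`: the matrix of
multiplication by `X` on `A[X]/(f)` in the basis `1, X, …, X^(n-1)`. -/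
def companionMatrix {A : Type*} [CommRing A] (n : ℕ) (f : A[X]) :
    Matrix (Fin n) (Fin n) A :=
  fun i j => if (j : ℕ) + 1 = n then -f.coeff i
    else if (i : ℕ) = (j : ℕ) + 1 then 1 else 0

/-!
Write `P(Y, X) = Σ B i j Y^i X^j` and read `B` as a function on `ℤ × ℤ`, zero outside
`[0, n)²`. Comparing the coefficients of `Y^a X^b` in the Bézout identity gives the recurrence
`B (a-1) b - B a (b-1) = f_a g_b - f_b g_a`. Entry `(i, j)` of `C * B` is
`B (i-1) j - f_i B (n-1) j` and that of `B * Cᵀ` is `B i (j-1) - f_j B i (n-1)`. The recurrence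
at `a = n` (resp. `b = n`) together with `f_n = 1` gives `B (n-1) j = g_j - f_j g_n` and
`B i (n-1) = g_i - f_i g_n`, after which the two entries differ by the recurrence at `(i, j)`.
-/

section

variable {A : Type*} [CommRing A] {n : ℕ}

theorem Polynomial.coeff_X_mul' {R : Type*} [Semiring R] (p : R[X]) (d : ℕ) :
    (X * p).coeff d = if 1 ≤ d then p.coeff (d - 1) else 0 := by
  simpa only [pow_one] using coeff_X_pow_mul' p 1 d

theorem Polynomial.aeval_C_X (g : A[X]) : aeval (C X : A[X][X]) g = C g := by
  rw [show (C X : A[X][X]) = CAlgHom (R := A) X from rfl, aeval_algHom_apply, aeval_X_left_apply]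
  rfl

noncomputable def Matrix.toBivariate (B : Matrix (Fin n) (Fin n) A) : A[X][X] :=
  ∑ i : Fin n, ∑ j : Fin n, C (C (B i j)) * X ^ (i : ℕ) * (C X) ^ (j : ℕ)

theorem Matrix.coeff_coeff_toBivariate (B : Matrix (Fin n) (Fin n) A) (a b : ℕ) :
    (B.toBivariate.coeff a).coeff b
      = if h : a < n ∧ b < n then B ⟨a, h.1⟩ ⟨b, h.2⟩ else 0 := by
  have hmonomial (i j : Fin n) :
      C (C (B i j)) * X ^ (i : ℕ) * (C X) ^ (j : ℕ) = monomial i (monomial j (B i j)) := by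
    rw [← C_mul_X_pow_eq_monomial, ← C_mul_X_pow_eq_monomial, C_mul, C_pow]
    ring
  simp only [toBivariate, hmonomial, finsetSum_coeff, coeff_monomial, apply_ite (coeff · b),
    coeff_zero]
  split_ifs with h
  · obtain ⟨ha, hb⟩ := h
    rw [Finset.sum_eq_single ⟨a, ha⟩, Finset.sum_eq_single ⟨b, hb⟩] <;>
      simp +contextual [Fin.ext_iff]
  · refine Finset.sum_eq_zero fun i _ => Finset.sum_eq_zero fun j _ => ?_
    grind

theorem IsBezoutMatrix.coeff_recurrence {f g : A[X]} {B : Matrix (Fin n) (Fin n) A}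
    (hB : IsBezoutMatrix f g B) (a b : ℕ) :
    (if 1 ≤ a then (B.toBivariate.coeff (a - 1)).coeff b else 0)
      - (if 1 ≤ b then (B.toBivariate.coeff a).coeff (b - 1) else 0)
      = f.coeff a * g.coeff b - f.coeff b * g.coeff a := by
  have hB' : f.map C * C g - C f * g.map C = (X - C X) * B.toBivariate := by
    rw [IsBezoutMatrix, aeval_C_X, aeval_C_X] at hB
    exact hB
  have h := congr_arg (fun p : A[X][X] => (p.coeff a).coeff b) hB'
  simp only [sub_mul, coeff_sub, coeff_C_mul, coeff_mul_C, coeff_map, coeff_X_mul'] at h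
  rw [h]
  simp only [apply_ite (coeff · b), coeff_zero]

theorem IsBezoutMatrix.coeff_toBivariate_last_row {f g : A[X]} {B : Matrix (Fin n) (Fin n) A}
    (hB : IsBezoutMatrix f g B) (hn : 1 ≤ n) (b : ℕ) :
    (B.toBivariate.coeff (n - 1)).coeff b = f.coeff n * g.coeff b - f.coeff b * g.coeff n := by
  have hzero : (B.toBivariate.coeff n).coeff (b - 1) = 0 := by simp [coeff_coeff_toBivariate]
  simpa only [hn, hzero, if_true, ite_self, sub_zero] using hB.coeff_recurrence n b

theorem IsBezoutMatrix.coeff_toBivariate_last_col {f g : A[X]} {B : Matrix (Fin n) (Fin n) A}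
    (hB : IsBezoutMatrix f g B) (hn : 1 ≤ n) (a : ℕ) :
    (B.toBivariate.coeff a).coeff (n - 1) = f.coeff n * g.coeff a - f.coeff a * g.coeff n := by
  have hzero : (B.toBivariate.coeff (a - 1)).coeff n = 0 := by simp [coeff_coeff_toBivariate]
  have h := hB.coeff_recurrence a n
  simp only [hn, hzero, if_true, ite_self, zero_sub] at h
  linear_combination -h

theorem sum_companionMatrix_mul (f : A[X]) (i : Fin n) (w : ℕ → A) :
    ∑ k : Fin n, companionMatrix n f i k * w k
      = -f.coeff i * w (n - 1) + if 1 ≤ (i : ℕ) then w (i - 1) else 0 := by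
  have hi := i.isLt
  have hrow (k : ℕ) (hk : k < n) :
      (if k + 1 = n then -f.coeff i else if (i : ℕ) = k + 1 then 1 else 0)
        = (if n - 1 = k then -f.coeff i else 0)
          + if 1 ≤ (i : ℕ) then (if (i : ℕ) - 1 = k then 1 else 0) else 0 := by
    split_ifs <;> first | (exfalso; omega) | simp
  simp only [companionMatrix]
  rw [Fin.sum_univ_eq_sum_range (fun k => (if k + 1 = n then -f.coeff i
    else if (i : ℕ) = k + 1 then 1 else 0) * w k)]
  rw [Finset.sum_congr rfl fun k hk => by rw [hrow k (Finset.mem_range.1 hk)]]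
  simp only [add_mul, Finset.sum_add_distrib, ite_mul, zero_mul, one_mul, Finset.sum_ite_eq,
    Finset.sum_ite_irrel, Finset.sum_const_zero, Finset.mem_range, if_pos (by omega : n - 1 < n),
    if_pos (by omega : (i : ℕ) - 1 < n)]

end

theorem companion_mul_bezoutMatrix_general {A : Type*} [CommRing A] {n : ℕ}
    (f g : A[X]) (hf : f.Monic) (hdf : f.natDegree = n)
    (B : Matrix (Fin n) (Fin n) A) (hB : IsBezoutMatrix f g B) :
    companionMatrix n f * B = B * (companionMatrix n f)ᵀ := by
  have hB_eq (i j : Fin n) : B i j = (B.toBivariate.coeff i).coeff j := by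
    simp [coeff_coeff_toBivariate]
  have hfn : f.coeff n = 1 := hdf ▸ hf.coeff_natDegree
  ext i j
  have hn : 1 ≤ n := i.pos
  set P := B.toBivariate
  have hL : (companionMatrix n f * B) i j = -f.coeff i * (P.coeff (n - 1)).coeff j
      + if 1 ≤ (i : ℕ) then (P.coeff (i - 1)).coeff j else 0 := by
    simpa only [mul_apply, hB_eq] using sum_companionMatrix_mul f i (fun k => (P.coeff k).coeff j)
  have hR : (B * (companionMatrix n f)ᵀ) i j = -f.coeff j * (P.coeff i).coeff (n - 1)
      + if 1 ≤ (j : ℕ) then (P.coeff i).coeff (j - 1) else 0 := by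
    simpa only [mul_apply, hB_eq, transpose_apply, mul_comm ((P.coeff _).coeff _)] using
      sum_companionMatrix_mul f j (P.coeff i).coeff
  rw [hL, hR, hB.coeff_toBivariate_last_row hn, hB.coeff_toBivariate_last_col hn, hfn]
  linear_combination hB.coeff_recurrence i j

theorem companion_mul_bezoutMatrix {A : Type*} [CommRing A] {n : ℕ}
    (f g : A[X]) (hf : f.Monic) (hdf : f.natDegree = n) (hdg : g.natDegree ≤ n - 1)
    (B : Matrix (Fin n) (Fin n) A) (hB : IsBezoutMatrix f g B) :
    companionMatrix n f * B = B * (companionMatrix n f)ᵀ :=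
  companion_mul_bezoutMatrix_general f g hf hdf B hB
end

section
/- Let K be an ordered field (or real closed field) and f ∈ K[X] a monic polynomial of degree n all of whose roots lie in K and are simple. Then the Bézout matrix B(f, f') of f and its derivative is positive definite over K. -/
/-! If `V` is the Vandermonde matrix of the roots `r i` of `f`, the entries of `V * B * Vᵀ` are the
values `Σ B k l (r i)^k (r j)^l` of the Bézout form at pairs of roots. Evaluating the Bézout identity
at two distinct roots kills these values off the diagonal; differentiating it at a root gives
`f'(r i)²` on the diagonal, which is nonzero because the roots are simple. As the roots are
distinct, `V` is invertible, so `B` is congruent to a diagonal matrix with positive entries. -/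

open Polynomial Matrix

theorem Lagrange.eval_derivative_nodal_ne_zero {R ι : Type*} [CommRing R] [IsDomain R]
    {s : Finset ι} {v : ι → R} (hvs : Set.InjOn v s) {i : ι} (hi : i ∈ s) :
    (derivative (nodal s v)).eval (v i) ≠ 0 := by
  classical
  rw [eval_nodal_derivative_eval_node_eq hi]
  refine eval_nodal_not_at_node fun j hj hij => ?_
  exact (Finset.mem_erase.1 hj).1 (hvs (Finset.mem_of_mem_erase hj) hi hij.symm)

theorem Matrix.vandermonde_mul_mul_transpose_apply {R : Type*} [CommRing R] {n : ℕ}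
    (r : Fin n → R) (B : Matrix (Fin n) (Fin n) R) (i j : Fin n) :
    (vandermonde r * B * (vandermonde r)ᵀ) i j
      = ∑ k : Fin n, ∑ l : Fin n, B k l * r i ^ (k : ℕ) * r j ^ (l : ℕ) := by
  simp only [mul_apply, transpose_apply, vandermonde_apply, Finset.sum_mul]
  rw [Finset.sum_comm]
  exact Finset.sum_congr rfl fun _ _ => Finset.sum_congr rfl fun _ _ => by ring

theorem Matrix.dotProduct_mulVec_pos_of_mul_mul_transpose_eq_diagonal {R ι : Type*}
    [CommRing R] [LinearOrder R] [IsStrictOrderedRing R] [Fintype ι] [DecidableEq ι]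
    {P B : Matrix ι ι R} {d : ι → R} (hP : IsUnit P.det) (hPB : P * B * Pᵀ = diagonal d)
    (hd : ∀ i, 0 < d i) {v : ι → R} (hv : v ≠ 0) : 0 < v ⬝ᵥ B *ᵥ v := by
  obtain ⟨w, rfl⟩ : ∃ w, Pᵀ *ᵥ w = v :=
    ⟨(Pᵀ)⁻¹ *ᵥ v, by rw [mulVec_mulVec, mul_nonsing_inv _ (by rwa [det_transpose]), one_mulVec]⟩
  have hw : w ≠ 0 := by rintro rfl; exact hv (mulVec_zero _)
  have hcongr : Pᵀ *ᵥ w ⬝ᵥ B *ᵥ (Pᵀ *ᵥ w) = w ⬝ᵥ diagonal d *ᵥ w := by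
    rw [← hPB, ← mulVec_mulVec, ← mulVec_mulVec, dotProduct_mulVec w P, mulVec_transpose]
  obtain ⟨i, hi⟩ := Function.ne_iff.1 hw
  rw [hcongr]
  simp only [dotProduct, mulVec_diagonal]
  refine Finset.sum_pos' (fun j _ => ?_) ⟨i, Finset.mem_univ i, ?_⟩
  · nlinarith [hd j, mul_self_nonneg (w j)]
  · nlinarith [hd i, mul_self_pos.2 hi]

namespace IsBezoutMatrix

variable {A : Type*} [CommRing A] {n : ℕ} {f g : A[X]} {B : Matrix (Fin n) (Fin n) A}

theorem map_aeval (hB : IsBezoutMatrix f g B) (t : A) :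
    f * C (g.eval t) - C (f.eval t) * g
      = (X - C t) * ∑ i : Fin n, ∑ j : Fin n, C (B i j) * X ^ (i : ℕ) * C t ^ (j : ℕ) := by
  have hX (p : A[X]) : mapAlgHom (aeval t) (aeval (X : A[X][X]) p) = p := by
    rw [← aeval_algHom_apply]; simp
  have hCX (p : A[X]) : mapAlgHom (aeval t) (aeval (C X : A[X][X]) p) = C (p.eval t) := by
    rw [← aeval_algHom_apply]; simp [aeval_def, eval₂_at_apply]
  have key := congrArg (mapAlgHom (aeval t)) hB
  simp only [map_sub, map_mul, map_sum, map_pow, hX, hCX] at key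
  simpa using key

theorem eval_eval (hB : IsBezoutMatrix f g B) (s t : A) :
    f.eval s * g.eval t - f.eval t * g.eval s
      = (s - t) * ∑ i : Fin n, ∑ j : Fin n, B i j * s ^ (i : ℕ) * t ^ (j : ℕ) := by
  simpa [eval_finsetSum] using congrArg (eval s) (hB.map_aeval t)

theorem sum_eq_zero_of_isRoot [IsDomain A] (hB : IsBezoutMatrix f g B) {s t : A} (hst : s ≠ t)
    (hs : f.IsRoot s) (ht : f.IsRoot t) :
    ∑ i : Fin n, ∑ j : Fin n, B i j * s ^ (i : ℕ) * t ^ (j : ℕ) = 0 := by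
  have h := hB.eval_eval s t
  rw [hs.eq_zero, ht.eq_zero, zero_mul, zero_mul, sub_zero] at h
  exact (mul_eq_zero.1 h.symm).resolve_left (sub_ne_zero.2 hst)

theorem sum_eq_of_isRoot (hB : IsBezoutMatrix f g B) {t : A} (ht : f.IsRoot t) :
    ∑ i : Fin n, ∑ j : Fin n, B i j * t ^ (i : ℕ) * t ^ (j : ℕ)
      = (derivative f).eval t * g.eval t := by
  have h := hB.map_aeval t
  -- `f * C (g t) = (X - C t) * Q`: differentiating and evaluating at `t` gives `f'(t) g(t) = Q(t)`
  rw [ht.eq_zero, C_0, zero_mul, sub_zero] at h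
  simpa [eval_finsetSum] using (congrArg (fun p => (derivative p).eval t) h).symm

theorem vandermonde_mul_mul_transpose [IsDomain A] (hB : IsBezoutMatrix f g B) {r : Fin n → A}
    (hr : Function.Injective r) (hroot : ∀ i, f.IsRoot (r i)) :
    vandermonde r * B * (vandermonde r)ᵀ
      = diagonal fun i => (derivative f).eval (r i) * g.eval (r i) := by
  ext i j
  rw [vandermonde_mul_mul_transpose_apply]
  obtain rfl | hij := eq_or_ne i j
  · rw [hB.sum_eq_of_isRoot (hroot i), diagonal_apply_eq]
  · rw [hB.sum_eq_zero_of_isRoot (hr.ne hij) (hroot i) (hroot j), diagonal_apply_ne _ hij]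

end IsBezoutMatrix

theorem bezoutMatrix_posDef_of_simple_roots_general {K : Type*} [Field K] [LinearOrder K] [IsStrictOrderedRing K] {n : ℕ}
    (f : K[X])
    (r : Fin n → K) (hinj : Function.Injective r)
    (hroots : f = ∏ i : Fin n, (X - C (r i)))
    (B : Matrix (Fin n) (Fin n) K) (hB : IsBezoutMatrix f (derivative f) B) :
    ∀ v : Fin n → K, v ≠ 0 → 0 < v ⬝ᵥ B.mulVec v := by
  rw [← Lagrange.nodal_eq] at hroots
  subst hroots
  have hroot (i : Fin n) : (Lagrange.nodal Finset.univ r).IsRoot (r i) :=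
    Lagrange.eval_nodal_at_node (Finset.mem_univ i)
  have hsimple (i : Fin n) : (derivative (Lagrange.nodal Finset.univ r)).eval (r i) ≠ 0 :=
    Lagrange.eval_derivative_nodal_ne_zero hinj.injOn (Finset.mem_univ i)
  intro v hv
  exact dotProduct_mulVec_pos_of_mul_mul_transpose_eq_diagonal
    (det_vandermonde_ne_zero_iff.2 hinj).isUnit (hB.vandermonde_mul_mul_transpose hinj hroot)
    (fun i => mul_self_pos.2 (hsimple i)) hv

theorem bezoutMatrix_posDef_of_simple_roots {K : Type*} [Field K] [LinearOrder K] [IsStrictOrderedRing K] {n : ℕ}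
    (f : K[X]) (hf : f.Monic) (hdf : f.natDegree = n)
    (r : Fin n → K) (hinj : Function.Injective r)
    (hroots : f = ∏ i : Fin n, (X - C (r i)))
    (B : Matrix (Fin n) (Fin n) K) (hB : IsBezoutMatrix f (derivative f) B) :
    ∀ v : Fin n → K, v ≠ 0 → 0 < v ⬝ᵥ B.mulVec v :=
  bezoutMatrix_posDef_of_simple_roots_general f r hinj hroots B hB
end

section
/- Let A be a commutative ring, f ∈ A[X] monic of degree n with companion matrix C, and let B ∈ Symₙ(A) be an invertible symmetric matrix with C·B = B·Cᵀ. Suppose there exist s ∈ ΣA² and Q ∈ Mat_{m,n}(A) with s·B = Iₙ + Qᵀ Q. Then the (n+m)×(n+m) matrix M = [[C − Qᵀ Q Cᵀ, C Qᵀ],[Q Cᵀ, 0]] is symmetric and its characteristic polynomial is divisible by f. -/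
open Polynomial Matrix

/-!
Conjugating `M` by the unipotent block matrix `[[1, Qᵀ], [0, 1]]` gives the block
lower-triangular matrix `[[C, 0], [Q Cᵀ, -Q Cᵀ Qᵀ]]`, so
`charpoly M = charpoly C * charpoly (-Q Cᵀ Qᵀ)`, and `charpoly C = f` because the row vector
`(1, X, …, X^(n-1))` times `X - C` is `f • eₙ₋₁`. Symmetry of the upper-left block
`C - QᵀQCᵀ` means `C QᵀQ = QᵀQ Cᵀ`, which follows from `C B = B Cᵀ` after substituting
`QᵀQ = s B - 1`.
-/

section

variable {A : Type*} [CommRing A]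

lemma vecMul_charmatrix_companionMatrix {k : ℕ} (f : A[X]) (hf : f.Monic)
    (hdf : f.natDegree = k + 1) :
    (fun i : Fin (k + 1) => (X : A[X]) ^ (i : ℕ)) ᵥ* charmatrix (companionMatrix (k + 1) f) =
      Pi.single (Fin.last k) f := by
  funext j
  induction j using Fin.lastCases with
  | last =>
    simp only [vecMul, dotProduct, charmatrix_apply, companionMatrix, diagonal_apply,
      Fin.val_last, if_true, map_neg, sub_neg_eq_add, mul_add, Finset.sum_add_distrib,
      Pi.single_eq_same, mul_ite, mul_zero, Finset.sum_ite_eq', Finset.mem_univ]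
    conv_rhs => rw [hf.as_sum, hdf, ← Fin.sum_univ_eq_sum_range]
    simp only [← pow_succ, X_pow_mul]
  | cast j =>
    have hj : (j : ℕ) + 1 ≠ k + 1 := by omega
    have hsucc (i : Fin (k + 1)) : (i : ℕ) = j + 1 ↔ i = j.succ := by simp [Fin.ext_iff]
    simp only [vecMul, dotProduct, charmatrix_apply, companionMatrix, diagonal_apply, hj,
      Fin.val_castSucc, hsucc, if_false, mul_sub, Finset.sum_sub_distrib, mul_ite, mul_zero,
      mul_one, apply_ite C, map_one, map_zero, Finset.sum_ite_eq', Finset.mem_univ, if_true]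
    simp [Fin.castSucc_ne_last, pow_succ]

lemma dvd_charpoly_companionMatrix {n : ℕ} (f : A[X]) (hf : f.Monic) (hdf : f.natDegree = n) :
    f ∣ (companionMatrix n f).charpoly := by
  obtain _ | k := n
  · simp [hf.natDegree_eq_zero.mp hdf]
  · have hrow := det_updateRow_sum (charmatrix (companionMatrix (k + 1) f)) 0
      (fun i => (X : A[X]) ^ (i : ℕ))
    have hsingle : Pi.single (Fin.last k) f = f • Pi.single (Fin.last k) (1 : A[X]) := by
      rw [← Pi.single_smul', smul_eq_mul, mul_one]
    rw [← vecMul_eq_sum, vecMul_charmatrix_companionMatrix f hf hdf, hsingle,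
      det_updateRow_smul] at hrow
    simp only [Fin.val_zero, pow_zero, one_smul] at hrow
    exact ⟨_, by rw [charpoly, ← hrow]⟩

lemma charpoly_companionMatrix {n : ℕ} (f : A[X]) (hf : f.Monic) (hdf : f.natDegree = n) :
    (companionMatrix n f).charpoly = f := by
  nontriviality A
  exact eq_of_monic_of_dvd_of_natDegree_le hf (charpoly_monic _)
    (dvd_charpoly_companionMatrix f hf hdf) (by simp [hdf])


variable {n m : Type*} [Fintype n] [Fintype m] [DecidableEq n]

lemma isSymm_fromBlocks_of_sos {C B : Matrix n n A} {Q : Matrix m n A} {s : A}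
    (hCB : C * B = B * Cᵀ) (hsos : s • B = 1 + Qᵀ * Q) :
    (fromBlocks (C - Qᵀ * Q * Cᵀ) (C * Qᵀ) (Q * Cᵀ) 0).IsSymm := by
  have hQQ : Qᵀ * Q = s • B - 1 := eq_sub_of_add_eq' hsos.symm
  have hcomm : Cᵀ + Qᵀ * Q * Cᵀ = C + C * (Qᵀ * Q) := by
    rw [hQQ, Matrix.mul_sub, Matrix.sub_mul, mul_smul_comm, smul_mul_assoc, hCB,
      Matrix.mul_one, Matrix.one_mul]
    abel
  refine .fromBlocks ?_ (by simp [Matrix.transpose_mul]) isSymm_zero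
  simp only [IsSymm, transpose_sub, transpose_mul, transpose_transpose]
  rw [sub_eq_sub_iff_add_eq_add, hcomm]

lemma charpoly_mul_mul_of_mul_eq_one {P P' N : Matrix n n A} (h : P' * P = 1) :
    (P * N * P').charpoly = N.charpoly := by
  rw [charpoly_mul_comm, ← Matrix.mul_assoc, h, Matrix.one_mul]

variable [DecidableEq m]

lemma fromBlocks_sub_mul_eq_conj (C : Matrix n n A) (P : Matrix n m A) (K : Matrix m n A) :
    fromBlocks (C - P * K) (C * P) K 0 =
      fromBlocks 1 (-P) 0 1 * fromBlocks C 0 K (-(K * P)) * fromBlocks 1 P 0 1 := by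
  simp [fromBlocks_multiply, Matrix.add_mul, Matrix.mul_assoc, sub_eq_add_neg]

lemma charpoly_fromBlocks_sub_mul (C : Matrix n n A) (P : Matrix n m A) (K : Matrix m n A) :
    (fromBlocks (C - P * K) (C * P) K 0).charpoly = C.charpoly * (-(K * P)).charpoly := by
  rw [fromBlocks_sub_mul_eq_conj, charpoly_mul_mul_of_mul_eq_one, charpoly_fromBlocks_zero₁₂]
  simp [fromBlocks_multiply, ← fromBlocks_one]

end

theorem symm_and_dvd_charpoly_of_sos_cert_general {A : Type*} [CommRing A] {n m : ℕ}
    (f : A[X]) (hf : f.Monic) (hdf : f.natDegree = n)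
    (B : Matrix (Fin n) (Fin n) A)
    (hCB : companionMatrix n f * B = B * (companionMatrix n f)ᵀ)
    (s : A) (Q : Matrix (Fin m) (Fin n) A)
    (hsos : s • B = 1 + Qᵀ * Q) :
    letI C := companionMatrix n f
    letI M : Matrix (Fin n ⊕ Fin m) (Fin n ⊕ Fin m) A :=
      Matrix.fromBlocks (C - Qᵀ * Q * Cᵀ) (C * Qᵀ) (Q * Cᵀ) 0
    M.IsSymm ∧ f ∣ M.charpoly := by
  refine ⟨isSymm_fromBlocks_of_sos hCB hsos, ?_⟩
  rw [Matrix.mul_assoc, charpoly_fromBlocks_sub_mul, charpoly_companionMatrix f hf hdf]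
  exact dvd_mul_right _ _

theorem symm_and_dvd_charpoly_of_sos_cert {A : Type*} [CommRing A] {n m : ℕ}
    (f : A[X]) (hf : f.Monic) (hdf : f.natDegree = n)
    (B : Matrix (Fin n) (Fin n) A) (hBsymm : B.IsSymm) (hBunit : IsUnit B.det)
    (hCB : companionMatrix n f * B = B * (companionMatrix n f)ᵀ)
    (s : A) (hs : IsSumSq s) (Q : Matrix (Fin m) (Fin n) A)
    (hsos : s • B = 1 + Qᵀ * Q) :
    letI C := companionMatrix n f
    letI M : Matrix (Fin n ⊕ Fin m) (Fin n ⊕ Fin m) A :=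
      Matrix.fromBlocks (C - Qᵀ * Q * Cᵀ) (C * Qᵀ) (Q * Cᵀ) 0
    M.IsSymm ∧ f ∣ M.charpoly :=
  symm_and_dvd_charpoly_of_sos_cert_general f hf hdf B hCB s Q hsos
end

section
/- Let A be an integral domain whose real spectrum is empty (equivalently, −1 is a sum of squares in the quotient field images; concretely assume −1 ∈ ΣA²). Then every element θ integral over A (in an algebraic closure of Quot(A)) is an eigenvalue of a symmetric matrix over A. -/
/-!
An integral θ is an eigenvalue of the companion matrix `C` of a monic polynomial it satisfies,
with eigenvector `v = (θ ^ i)ᵢ`. Writing `-1 = ∑ⱼ sⱼ²`, let `B` stack the blocks `sⱼ • C`. The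
symmetric matrix `[[C + Cᵀ, Bᵀ], [B, 0]]` has the eigenvector `(v, (sⱼ • v)ⱼ)` for θ: the lower
rows give `sⱼ • C v = θ • sⱼ • v`, and in the upper rows `Bᵀ` contributes
`(∑ⱼ sⱼ²) • Cᵀ v = -Cᵀ v`, which cancels the `Cᵀ v` coming from the corner.
-/

open Matrix Polynomial

theorem IsSumSq.exists_fin_sum_mul_self {R : Type*} [AddCommMonoid R] [Mul R] {a : R}
    (ha : IsSumSq a) : ∃ (k : ℕ) (s : Fin k → R), ∑ i, s i * s i = a := by
  induction ha with
  | zero => exact ⟨0, Fin.elim0, by simp⟩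
  | sq_add x _ ih =>
    obtain ⟨k, s, rfl⟩ := ih
    exact ⟨k + 1, Fin.cons x s, by simp [Fin.sum_univ_succ]⟩

theorem Polynomial.Monic.aeval_eq_pow_add_sum {R L : Type*} [CommRing R] [CommRing L] [Algebra R L]
    {p : R[X]} (hp : p.Monic) (θ : L) :
    aeval θ p =
      θ ^ p.natDegree + ∑ j : Fin p.natDegree, algebraMap R L (p.coeff j) * θ ^ (j : ℕ) := by
  conv_lhs => rw [hp.as_sum]
  simp [Fin.sum_univ_eq_sum_range (fun j => algebraMap R L (p.coeff j) * θ ^ j)]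

namespace Matrix

variable {R : Type*} [CommRing R]

/-- The transpose of the usual companion matrix, so that powers of a root form a right
eigenvector. -/
def companion (p : R[X]) : Matrix (Fin p.natDegree) (Fin p.natDegree) R :=
  of fun i j => if (j : ℕ) = i + 1 then 1 else if (i : ℕ) + 1 = p.natDegree then -p.coeff j else 0

theorem companion_map_mulVec_pow {L : Type*} [CommRing L] [Algebra R L] {p : R[X]}
    (hp : p.Monic) {θ : L} (hθ : aeval θ p = 0) :
    (companion p).map (algebraMap R L) *ᵥ (fun i => θ ^ (i : ℕ)) =
      θ • fun i : Fin p.natDegree => θ ^ (i : ℕ) := by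
  ext i
  rw [Pi.smul_apply, smul_eq_mul, ← pow_succ']
  by_cases hi : (i : ℕ) + 1 = p.natDegree
  · have hne (j : Fin p.natDegree) : (j : ℕ) ≠ p.natDegree := j.isLt.ne
    rw [hp.aeval_eq_pow_add_sum, add_eq_zero_iff_eq_neg] at hθ
    simp [mulVec, dotProduct, companion, hi, hne, hθ]
  · have hlt : (i : ℕ) + 1 < p.natDegree := lt_of_le_of_ne i.isLt hi
    have hsucc (j : Fin p.natDegree) : (j : ℕ) = i + 1 ↔ j = ⟨i + 1, hlt⟩ := by
      simp [Fin.ext_iff]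
    simp [mulVec, dotProduct, companion, hi, hsucc]

variable {n ι : Type*}

def sumSqDilation (C : Matrix n n R) (s : ι → R) : Matrix (n ⊕ ι × n) (n ⊕ ι × n) R :=
  fromBlocks (C + Cᵀ) (of fun i jl => s jl.1 * C jl.2 i) (of fun jl i => s jl.1 * C jl.2 i) 0

theorem isSymm_sumSqDilation (C : Matrix n n R) (s : ι → R) : (sumSqDilation C s).IsSymm :=
  IsSymm.fromBlocks (by simp [IsSymm, add_comm]) rfl isSymm_zero

theorem sumSqDilation_map {S : Type*} [CommRing S] (C : Matrix n n R) (s : ι → R) (f : R →+* S) :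
    (sumSqDilation C s).map f = sumSqDilation (C.map f) (f ∘ s) := by
  ext (i | ⟨j, l⟩) (i' | ⟨j', l'⟩) <;> simp [sumSqDilation]

theorem sumSqDilation_mulVec [Fintype n] [Fintype ι] {C : Matrix n n R} {s : ι → R}
    (hs : ∑ j, s j * s j = -1) {θ : R} {v : n → R} (hv : C *ᵥ v = θ • v) :
    sumSqDilation C s *ᵥ Sum.elim v (fun jl => s jl.1 * v jl.2) =
      θ • Sum.elim v (fun jl => s jl.1 * v jl.2) := by
  have hcol : (of fun i (jl : ι × n) => s jl.1 * C jl.2 i) *ᵥ (fun jl => s jl.1 * v jl.2) =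
      -(Cᵀ *ᵥ v) := by
    ext i
    calc ∑ jl : ι × n, s jl.1 * C jl.2 i * (s jl.1 * v jl.2)
        = ∑ j, s j * s j * (Cᵀ *ᵥ v) i := by
          simp only [Fintype.sum_prod_type, mulVec, dotProduct, transpose_apply, Finset.mul_sum]
          exact Finset.sum_congr rfl fun _ _ => Finset.sum_congr rfl fun _ _ => by ring
      _ = -(Cᵀ *ᵥ v) i := by rw [← Finset.sum_mul, hs, neg_one_mul]
  have hrow : (of fun (jl : ι × n) i => s jl.1 * C jl.2 i) *ᵥ v =
      fun jl => θ * (s jl.1 * v jl.2) := by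
    ext ⟨j, l⟩
    have hl : ∑ i, C l i * v i = θ * v l := congrFun hv l
    calc ∑ i, s j * C l i * v i = s j * ∑ i, C l i * v i := by
          simp only [mul_assoc, Finset.mul_sum]
      _ = θ * (s j * v l) := by rw [hl, mul_left_comm]
  rw [sumSqDilation, fromBlocks_mulVec, Sum.elim_comp_inl, Sum.elim_comp_inr, hcol, hrow,
    add_mulVec, hv]
  ext (i | jl) <;> simp

theorem aeval_charpoly_eq_zero_of_mulVec_eq_smul {A L : Type*} [CommRing A] [CommRing L]
    [IsDomain L] [Algebra A L] [Fintype n] [DecidableEq n] {M : Matrix n n A} {θ : L}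
    {w : n → L} (hw : w ≠ 0)
    (h : M.map (algebraMap A L) *ᵥ w = θ • w) : aeval θ M.charpoly = 0 := by
  rw [aeval_def, ← eval_map, ← charpoly_map, eval_charpoly, ← exists_mulVec_eq_zero_iff]
  refine ⟨w, hw, ?_⟩
  ext i
  simp [sub_mulVec, h, scalar_apply]

end Matrix

theorem eigenvalue_of_neg_one_isSumSq_general {A : Type*} [CommRing A]
    (h : IsSumSq (-1 : A))
    {L : Type*} [Field L] [Algebra A L]
    (θ : L) (hθ : IsIntegral A θ) :
    ∃ (r : ℕ) (M : Matrix (Fin r) (Fin r) A),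
      M.IsSymm ∧ Polynomial.aeval θ M.charpoly = 0 := by
  obtain ⟨k, s, hs⟩ := h.exists_fin_sum_mul_self
  obtain ⟨p, hp, hpθ⟩ := hθ
  rw [← aeval_def] at hpθ
  have hdeg : 0 < p.natDegree := hp.natDegree_pos.mpr (by rintro rfl; simp at hpθ)
  set f := algebraMap A L
  set v : Fin p.natDegree → L := fun i => θ ^ (i : ℕ)
  set w : Fin p.natDegree ⊕ Fin k × Fin p.natDegree → L :=
    Sum.elim v fun jl => f (s jl.1) * v jl.2
  have hw : w ≠ 0 := fun h0 => by simpa [w, v] using congrFun h0 (Sum.inl ⟨0, hdeg⟩)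
  have hM : (sumSqDilation (companion p) s).map f *ᵥ w = θ • w := by
    rw [sumSqDilation_map]
    exact sumSqDilation_mulVec (by simpa [← map_mul, ← map_sum] using congrArg f hs)
      (companion_map_mulVec_pow hp hpθ)
  let e := Fintype.equivFin (Fin p.natDegree ⊕ Fin k × Fin p.natDegree)
  refine ⟨_, reindex e e (sumSqDilation (companion p) s),
    (isSymm_sumSqDilation _ s).submatrix _, ?_⟩
  rw [charpoly_reindex]
  exact aeval_charpoly_eq_zero_of_mulVec_eq_smul hw hM

theorem eigenvalue_of_neg_one_isSumSq {A : Type*} [CommRing A] [IsDomain A]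
    (h : IsSumSq (-1 : A))
    {L : Type*} [Field L] [Algebra A L]
    (hinj : Function.Injective (algebraMap A L))
    (θ : L) (hθ : IsIntegral A θ) :
    ∃ (r : ℕ) (M : Matrix (Fin r) (Fin r) A),
      M.IsSymm ∧ Polynomial.aeval θ M.charpoly = 0 :=
  eigenvalue_of_neg_one_isSumSq_general h θ hθ
end
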